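/- If a digraph H contains an invertible pair (a pair (x,y) with (x,y) and (y,x) in the same strong component of the pair digraph Ĥ²), then H does not admit a min-ordering. -/

import Mathlib

/-!
A min-ordering `<` transports the orientation of a pair along the arcs of the pair digraph:
if `a₁ < a₂` and `(a₁, a₂) → (b₁, b₂)`, then `b₂ < b₁` would force the forbidden arc `a₁ b₂`
(resp. `b₂ a₁`) by the min-ordering property, and `b₁ = b₂` would make it an arc outright,
so `b₁ < b₂`. Following the walks `(x, y) ⇝ (y, x)` and `(y, x) ⇝ (x, y)` from whichever of
`x < y`, `y < x` holds then yields both.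
-/

section MinOrdering

variable {V : Type*}

def PairArc (A : V → V → Prop) (p q : V × V) : Prop :=
  (A p.1 q.1 ∧ A p.2 q.2 ∧ ¬ A p.1 q.2) ∨ (A q.1 p.1 ∧ A q.2 p.2 ∧ ¬ A q.2 p.1)

def IsMinOrdering (A lt : V → V → Prop) : Prop :=
  ∀ u u' v v', A u v → A u' v' → lt u u' → lt v' v → A u v'

variable {A lt : V → V → Prop} [Std.Trichotomous lt]

theorem IsMinOrdering.lt_of_pairArc (hmin : IsMinOrdering A lt) {p q : V × V}
    (hpq : PairArc A p q) (hp : lt p.1 p.2) : lt q.1 q.2 := by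
  obtain ⟨a₁, a₂⟩ := p
  obtain ⟨b₁, b₂⟩ := q
  rcases trichotomous_of lt b₁ b₂ with hb | rfl | hb
  · exact hb
  · rcases hpq with ⟨h₁, -, h₃⟩ | ⟨h₁, -, h₃⟩ <;> exact absurd h₁ h₃
  · rcases hpq with ⟨h₁, h₂, h₃⟩ | ⟨h₁, h₂, h₃⟩
    · exact absurd (hmin _ _ _ _ h₁ h₂ hp hb) h₃
    · exact absurd (hmin _ _ _ _ h₂ h₁ hb hp) h₃

theorem IsMinOrdering.lt_of_reflTransGen_pairArc (hmin : IsMinOrdering A lt) {p q : V × V}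
    (hpq : Relation.ReflTransGen (PairArc A) p q) (hp : lt p.1 p.2) : lt q.1 q.2 := by
  induction hpq with
  | refl => exact hp
  | tail _ hrs ih => exact hmin.lt_of_pairArc hrs ih

end MinOrdering

/-- If a digraph `H` contains an invertible pair — distinct vertices `x, y`
with `(x,y)` and `(y,x)` in the same strong component of the pair digraph `Ĥ²` — then
`H` admits no min-ordering. -/
theorem stmt_9 {V : Type*} (A : V → V → Prop)
    (Arc2 : V × V → V × V → Prop)
    (hArc2 : ∀ p q, Arc2 p q ↔
      ((A p.1 q.1 ∧ A p.2 q.2 ∧ ¬ A p.1 q.2) ∨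
       (A q.1 p.1 ∧ A q.2 p.2 ∧ ¬ A q.2 p.1)))
    (x y : V) (hxy : x ≠ y)
    (hinv1 : Relation.ReflTransGen Arc2 (x, y) (y, x))
    (hinv2 : Relation.ReflTransGen Arc2 (y, x) (x, y)) :
    ¬ ∃ lt : V → V → Prop, IsStrictTotalOrder V lt ∧
        ∀ u u' v v', A u v → A u' v' → lt u u' → lt v' v → A u v' := by
  rintro ⟨lt, _, hmin⟩
  have hmin : IsMinOrdering A lt := hmin
  obtain rfl : Arc2 = PairArc A := funext₂ fun p q => propext (hArc2 p q)
  rcases trichotomous_of lt x y with h | rfl | h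
  · exact asymm_of lt h (hmin.lt_of_reflTransGen_pairArc hinv1 h)
  · exact hxy rfl
  · exact asymm_of lt h (hmin.lt_of_reflTransGen_pairArc hinv2 h)
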